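/- arXiv:1003.4703 — 2 statements merged into one kernel-verified Lean document; each statement's English description precedes it below -/
import Mathlib

section
/- Let A be a Hermitian matrix and B a positive semidefinite Hermitian matrix on a finite-dimensional complex inner product space, and let E < min spec(A). Then the number of eigenvalues of A − B below E equals the number of eigenvalues of the matrix B^{1/2}(A−E)^{-1}B^{1/2} that are greater than 1. -/
/-!
By the min–max principle, the number of eigenvalues of a Hermitian `M` below `t` is the largest
dimension of a subspace on whose nonzero vectors `⟪x, (M - t) x⟫ < 0` (`maxFinrank`).
Write `A - E = S²` and `B = R²` with Hermitian square roots, and `Y = R S⁻¹`. Then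
`A - B - E = Sᴴ S - (Y S)ᴴ (Y S)` and `1 - R (A - E)⁻¹ R = 1 - Y Yᴴ`, so the two counts are the
largest dimensions of subspaces on which `‖S x‖ < ‖Y S x‖`, resp. `‖z‖ < ‖Yᴴ z‖`. The invertible
substitution `y = S x` removes `S`, and the two conditions `‖y‖ < ‖Y y‖` and `‖z‖ < ‖Yᴴ z‖` give
the same largest dimension: `Y` maps a subspace of the first kind injectively to one of the second
kind, since `‖Y y‖² = re ⟪Yᴴ Y y, y⟫ ≤ ‖Yᴴ Y y‖ ‖y‖`, and `Yᴴ` maps back.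
-/

open scoped Classical ComplexOrder

namespace Matrix.PosSemidef

/-- The positive square root of a positive semidefinite matrix, with the definition it had in
Mathlib (December 2024), where it has since been removed in favour of `CFC.sqrt`. -/
noncomputable def sqrt {n : Type*} {𝕜 : Type*} [Fintype n] [DecidableEq n] [RCLike 𝕜]
    {A : Matrix n n 𝕜} (hA : A.PosSemidef) : Matrix n n 𝕜 :=
  hA.1.eigenvectorUnitary.1 * Matrix.diagonal ((↑) ∘ (√·) ∘ hA.1.eigenvalues) *
    (star hA.1.eigenvectorUnitary : Matrix n n 𝕜)

end Matrix.PosSemidef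

open Finset Matrix Module
open scoped InnerProductSpace

section MaxFinrank

variable (𝕜 : Type*) {V V' : Type*} [Field 𝕜] [AddCommGroup V] [Module 𝕜 V]
  [AddCommGroup V'] [Module 𝕜 V']

/-- Only meaningful in finite dimension: otherwise the set may be unbounded and `sSup` is `0`. -/
noncomputable def maxFinrank (p : V → Prop) : ℕ :=
  sSup {d | ∃ W : Submodule 𝕜 V, (∀ x ∈ W, x ≠ 0 → p x) ∧ finrank 𝕜 W = d}

variable {𝕜} [FiniteDimensional 𝕜 V] [FiniteDimensional 𝕜 V'] {p : V → Prop} {q : V' → Prop}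

theorem bddAbove_finrank_setOf (p : V → Prop) :
    BddAbove {d | ∃ W : Submodule 𝕜 V, (∀ x ∈ W, x ≠ 0 → p x) ∧ finrank 𝕜 W = d} :=
  ⟨finrank 𝕜 V, by rintro _ ⟨W, -, rfl⟩; exact W.finrank_le⟩

theorem finrank_le_maxFinrank {W : Submodule 𝕜 V} (hW : ∀ x ∈ W, x ≠ 0 → p x) :
    finrank 𝕜 W ≤ maxFinrank 𝕜 p :=
  le_csSup (bddAbove_finrank_setOf p) ⟨W, hW, rfl⟩

theorem exists_finrank_eq_maxFinrank (p : V → Prop) :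
    ∃ W : Submodule 𝕜 V, (∀ x ∈ W, x ≠ 0 → p x) ∧ finrank 𝕜 W = maxFinrank 𝕜 p :=
  Nat.sSup_mem (s := {d | ∃ W : Submodule 𝕜 V, (∀ x ∈ W, x ≠ 0 → p x) ∧ finrank 𝕜 W = d})
    ⟨0, ⊥, by simp, finrank_bot 𝕜 V⟩ (bddAbove_finrank_setOf p)

theorem maxFinrank_le_of_map (f : V →ₗ[𝕜] V') (hf : ∀ x, x ≠ 0 → p x → f x ≠ 0 ∧ q (f x)) :
    maxFinrank 𝕜 p ≤ maxFinrank 𝕜 q := by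
  obtain ⟨W, hWp, hW⟩ := exists_finrank_eq_maxFinrank (𝕜 := 𝕜) p
  have hinj : Function.Injective (f.domRestrict W) := by
    rw [← LinearMap.ker_eq_bot, Submodule.eq_bot_iff]
    rintro ⟨x, hxW⟩ hx
    by_contra hx0
    exact (hf x (by simpa using hx0) (hWp x hxW (by simpa using hx0))).1 hx
  rw [← hW, ← LinearMap.finrank_range_of_inj hinj, LinearMap.range_domRestrict]
  refine finrank_le_maxFinrank ?_
  rintro _ ⟨x, hxW, rfl⟩ hx
  exact (hf x (by rintro rfl; simp at hx) (hWp x hxW (by rintro rfl; simp at hx))).2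

theorem maxFinrank_comp_linearEquiv (e : V ≃ₗ[𝕜] V') (q : V' → Prop) :
    maxFinrank 𝕜 (q ∘ e) = maxFinrank 𝕜 q :=
  le_antisymm
    (maxFinrank_le_of_map e.toLinearMap fun _ hx hq => ⟨e.map_ne_zero_iff.2 hx, hq⟩)
    (maxFinrank_le_of_map e.symm.toLinearMap fun _ hx hq =>
      ⟨e.symm.map_ne_zero_iff.2 hx, by simpa using hq⟩)

end MaxFinrank

section Eigenbasis

variable {𝕜 V ι : Type*} [RCLike 𝕜] [NormedAddCommGroup V] [InnerProductSpace 𝕜 V]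
  [Fintype ι] {b : OrthonormalBasis ι 𝕜 V} {μ : ι → ℝ} {T : V →ₗ[𝕜] V}

theorem repr_apply_of_eigenbasis (hT : ∀ i, T (b i) = (μ i : 𝕜) • b i) (x : V) (i : ι) :
    b.repr (T x) i = μ i * b.repr x i := by
  classical
  conv_lhs => rw [← b.sum_repr x]
  simp [hT, OrthonormalBasis.repr_self, Pi.single_apply, RCLike.real_smul_eq_coe_mul, mul_comm]

theorem re_inner_apply_eq_sum (hT : ∀ i, T (b i) = (μ i : 𝕜) • b i) (x : V) :
    RCLike.re ⟪x, T x⟫_𝕜 = ∑ i, μ i * ‖b.repr x i‖ ^ 2 := by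
  rw [← b.repr.inner_map_map, PiLp.inner_apply, map_sum]
  refine Finset.sum_congr rfl fun i _ => ?_
  rw [repr_apply_of_eigenbasis hT, RCLike.inner_apply', mul_left_comm, RCLike.conj_mul]
  norm_cast

theorem OrthonormalBasis.repr_eq_zero_of_mem_span (b : OrthonormalBasis ι 𝕜 V) {s : Set ι}
    {x : V} (hx : x ∈ Submodule.span 𝕜 (b '' s)) {i : ι} (hi : i ∉ s) : b.repr x i = 0 := by
  rw [← b.coe_toBasis, b.toBasis.mem_span_image] at hx
  rw [← b.coe_toBasis_repr_apply]
  exact Finsupp.notMem_support_iff.1 fun h => hi (hx h)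

theorem OrthonormalBasis.finrank_span_image (b : OrthonormalBasis ι 𝕜 V) (s : Finset ι) :
    finrank 𝕜 (Submodule.span 𝕜 (b '' s)) = #s := by
  rw [Set.image_eq_range]
  exact (finrank_span_eq_card
    (b.orthonormal.linearIndependent.comp ((↑) : s → ι) Subtype.val_injective)).trans (by simp)

theorem re_inner_apply_nonneg_of_mem_span (hT : ∀ i, T (b i) = (μ i : 𝕜) • b i) {s : Set ι}
    (hs : ∀ i ∈ s, 0 ≤ μ i) {x : V} (hx : x ∈ Submodule.span 𝕜 (b '' s)) :
    0 ≤ RCLike.re ⟪x, T x⟫_𝕜 := by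
  rw [re_inner_apply_eq_sum hT]
  refine Finset.sum_nonneg fun i _ => ?_
  by_cases hi : i ∈ s
  · exact mul_nonneg (hs i hi) (sq_nonneg _)
  · simp [b.repr_eq_zero_of_mem_span hx hi]

theorem re_inner_apply_neg_of_mem_span (hT : ∀ i, T (b i) = (μ i : 𝕜) • b i) {s : Set ι}
    (hs : ∀ i ∈ s, μ i < 0) {x : V} (hx : x ∈ Submodule.span 𝕜 (b '' s)) (hx0 : x ≠ 0) :
    RCLike.re ⟪x, T x⟫_𝕜 < 0 := by
  obtain ⟨j, hj⟩ : ∃ j, b.repr x j ≠ 0 := by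
    by_contra! h
    exact hx0 (b.repr.injective (by ext j; simp [h j]))
  have hjs : j ∈ s := by_contra fun h => hj (b.repr_eq_zero_of_mem_span hx h)
  rw [re_inner_apply_eq_sum hT, ← neg_pos, ← Finset.sum_neg_distrib]
  refine Finset.sum_pos' (fun i _ => ?_) ⟨j, Finset.mem_univ j, ?_⟩
  · by_cases hi : i ∈ s
    · exact neg_nonneg.2 (mul_nonpos_of_nonpos_of_nonneg (hs i hi).le (sq_nonneg _))
    · simp [b.repr_eq_zero_of_mem_span hx hi]
  · exact neg_pos.2 (mul_neg_of_neg_of_pos (hs j hjs) (by positivity))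

theorem card_neg_eq_maxFinrank (hT : ∀ i, T (b i) = (μ i : 𝕜) • b i) :
    #{i | μ i < 0} = maxFinrank 𝕜 (fun x : V => RCLike.re ⟪x, T x⟫_𝕜 < 0) := by
  classical
  have := b.toBasis.finiteDimensional_of_finite
  set s : Finset ι := {i | μ i < 0}
  refine le_antisymm ?_ ?_
  · refine b.finrank_span_image s ▸ finrank_le_maxFinrank fun x hx hx0 => ?_
    exact re_inner_apply_neg_of_mem_span hT (by simp [s]) hx hx0
  · obtain ⟨W, hW, hWrank⟩ :=
      exists_finrank_eq_maxFinrank (𝕜 := 𝕜) fun x : V => RCLike.re ⟪x, T x⟫_𝕜 < 0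
    have hdisj : Disjoint W (Submodule.span 𝕜 (b '' ↑sᶜ)) := by
      refine Submodule.disjoint_def.2 fun x hxW hx => by_contra fun hx0 => ?_
      exact (hW x hxW hx0).not_ge (re_inner_apply_nonneg_of_mem_span hT (by simp [s]) hx)
    have := Submodule.finrank_add_finrank_le_of_disjoint hdisj
    rw [b.finrank_span_image, finrank_eq_card_basis b.toBasis, Finset.card_compl] at this
    have := Finset.card_le_univ s
    omega

end Eigenbasis

section Adjoint

variable {𝕜 V V' : Type*} [RCLike 𝕜] [NormedAddCommGroup V] [InnerProductSpace 𝕜 V]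
  [NormedAddCommGroup V'] [InnerProductSpace 𝕜 V'] [FiniteDimensional 𝕜 V]
  [FiniteDimensional 𝕜 V']

theorem norm_apply_lt_norm_adjoint_apply_apply {f : V →ₗ[𝕜] V'} {y : V} (h : ‖y‖ < ‖f y‖) :
    ‖f y‖ < ‖f.adjoint (f y)‖ := by
  have hsq : ‖f y‖ ^ 2 ≤ ‖f.adjoint (f y)‖ * ‖y‖ := by
    rw [← inner_self_eq_norm_sq (𝕜 := 𝕜), ← f.adjoint_inner_left]
    exact re_inner_le_norm _ _
  nlinarith [norm_nonneg y, norm_nonneg (f.adjoint (f y))]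

theorem maxFinrank_norm_lt_norm_apply_le (f : V →ₗ[𝕜] V') :
    maxFinrank 𝕜 (fun y => ‖y‖ < ‖f y‖) ≤ maxFinrank 𝕜 (fun z => ‖z‖ < ‖f.adjoint z‖) :=
  maxFinrank_le_of_map f fun _ _ h =>
    ⟨norm_pos_iff.1 ((norm_nonneg _).trans_lt h), norm_apply_lt_norm_adjoint_apply_apply h⟩

theorem maxFinrank_norm_lt_norm_adjoint_apply (f : V →ₗ[𝕜] V') :
    maxFinrank 𝕜 (fun z => ‖z‖ < ‖f.adjoint z‖) = maxFinrank 𝕜 (fun y => ‖y‖ < ‖f y‖) :=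
  le_antisymm (by simpa using maxFinrank_norm_lt_norm_apply_le f.adjoint)
    (maxFinrank_norm_lt_norm_apply_le f)

end Adjoint

namespace Matrix

variable {𝕜 l m n : Type*} [RCLike 𝕜] [Fintype l] [DecidableEq l] [Fintype m] [DecidableEq m]
  [Fintype n] [DecidableEq n]

theorem re_inner_toEuclideanLin_conjTranspose_mul_self (C : Matrix m n 𝕜)
    (x : EuclideanSpace 𝕜 n) :
    RCLike.re ⟪x, toEuclideanLin (Cᴴ * C) x⟫_𝕜 = ‖toEuclideanLin C x‖ ^ 2 := by
  rw [toLpLin_mul_same, LinearMap.comp_apply, toEuclideanLin_conjTranspose_eq_adjoint,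
    LinearMap.adjoint_inner_right, inner_self_eq_norm_sq]

theorem re_inner_toEuclideanLin_neg_iff (C : Matrix m n 𝕜) (D : Matrix l n 𝕜)
    (x : EuclideanSpace 𝕜 n) :
    RCLike.re ⟪x, toEuclideanLin (Cᴴ * C - Dᴴ * D) x⟫_𝕜 < 0 ↔
      ‖toEuclideanLin C x‖ < ‖toEuclideanLin D x‖ := by
  rw [map_sub, LinearMap.sub_apply, inner_sub_right, map_sub,
    re_inner_toEuclideanLin_conjTranspose_mul_self, re_inner_toEuclideanLin_conjTranspose_mul_self,
    sub_neg, sq_lt_sq₀ (norm_nonneg _) (norm_nonneg _)]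

theorem maxFinrank_comp_toEuclideanLin {S : Matrix n n 𝕜} (hS : IsUnit S.det)
    (q : EuclideanSpace 𝕜 n → Prop) : maxFinrank 𝕜 (q ∘ toEuclideanLin S) = maxFinrank 𝕜 q :=
  maxFinrank_comp_linearEquiv (.ofLinearMap (toEuclideanLin S) (toEuclideanLin S⁻¹)
    (by rw [← toLpLin_mul_same, mul_nonsing_inv _ hS, toLpLin_one])
    (by rw [← toLpLin_mul_same, nonsing_inv_mul _ hS, toLpLin_one])) q

namespace IsHermitian

variable {M : Matrix n n 𝕜} (hM : M.IsHermitian)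

theorem toEuclideanLin_sub_smul_one_eigenvectorBasis (t : ℝ) (i : n) :
    toEuclideanLin (M - t • 1) (hM.eigenvectorBasis i) =
      ((hM.eigenvalues i - t : ℝ) : 𝕜) • hM.eigenvectorBasis i := by
  ext j
  have := congrFun (hM.mulVec_eigenvectorBasis i) j
  simp [toLpLin_apply, smul_mulVec, this, sub_mul, RCLike.real_smul_eq_coe_mul]

theorem card_eigenvalues_lt_eq_maxFinrank (t : ℝ) :
    #{i | hM.eigenvalues i < t} =
      maxFinrank 𝕜 (fun x => RCLike.re ⟪x, toEuclideanLin (M - t • 1) x⟫_𝕜 < 0) := by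
  simp_rw [← sub_neg (a := hM.eigenvalues _)]
  exact card_neg_eq_maxFinrank (hM.toEuclideanLin_sub_smul_one_eigenvectorBasis t)

theorem card_lt_eigenvalues_eq_maxFinrank (t : ℝ) :
    #{i | t < hM.eigenvalues i} =
      maxFinrank 𝕜 (fun x => RCLike.re ⟪x, toEuclideanLin (t • 1 - M) x⟫_𝕜 < 0) := by
  simp_rw [← sub_neg (b := hM.eigenvalues _)]
  refine card_neg_eq_maxFinrank (b := hM.eigenvectorBasis) fun i => ?_
  rw [← neg_sub, map_neg, LinearMap.neg_apply, toEuclideanLin_sub_smul_one_eigenvectorBasis,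
    ← neg_smul, ← RCLike.ofReal_neg, neg_sub]

theorem posDef_sub_smul_one {E : ℝ} (hE : ∀ i, E < hM.eigenvalues i) : (M - E • 1).PosDef := by
  have hdiag : diagonal (RCLike.ofReal ∘ fun i => hM.eigenvalues i - E) =
      diagonal (RCLike.ofReal ∘ hM.eigenvalues) - E • (1 : Matrix n n 𝕜) := by
    ext i j
    by_cases h : i = j <;> simp [h, RCLike.real_smul_eq_coe_mul]
  have hconj : M - E • 1 = Unitary.conjStarAlgAut 𝕜 _ hM.eigenvectorUnitary
      (diagonal (RCLike.ofReal ∘ fun i => hM.eigenvalues i - E)) := by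
    conv_lhs => rw [hM.spectral_theorem]
    simp [hdiag, Unitary.conjStarAlgAut_apply, mul_sub, sub_mul]
  rw [hconj, Unitary.conjStarAlgAut_apply,
    Matrix.IsUnit.posDef_star_right_conjugate_iff Unitary.isUnit_coe]
  simpa using hE

end IsHermitian

end Matrix

namespace Matrix.PosSemidef

variable {𝕜 n : Type*} [RCLike 𝕜] [Fintype n] [DecidableEq n] {A : Matrix n n 𝕜}

theorem posSemidef_sqrt (hA : A.PosSemidef) : hA.sqrt.PosSemidef :=
  (PosSemidef.diagonal fun i => by simp).mul_mul_conjTranspose_same _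

theorem sqrt_mul_self (hA : A.PosSemidef) : hA.sqrt * hA.sqrt = A := by
  have hdiag : diagonal ((↑) ∘ (√·) ∘ hA.1.eigenvalues) * diagonal ((↑) ∘ (√·) ∘ hA.1.eigenvalues)
      = diagonal (RCLike.ofReal ∘ hA.1.eigenvalues : n → 𝕜) := by
    rw [diagonal_mul_diagonal]
    congr 1 with i
    simp [← RCLike.ofReal_mul, Real.mul_self_sqrt (hA.eigenvalues_nonneg i)]
  conv_rhs => rw [hA.1.spectral_theorem, Unitary.conjStarAlgAut_apply, ← hdiag]
  simp only [sqrt, Matrix.mul_assoc]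
  rw [← Matrix.mul_assoc (star _) (hA.1.eigenvectorUnitary : Matrix n n 𝕜),
    Unitary.coe_star_mul_self, Matrix.one_mul]

theorem isUnit_sqrt (hA : A.PosSemidef) (h : IsUnit A) : IsUnit hA.sqrt := by
  rw [← hA.sqrt_mul_self, isUnit_iff_isUnit_det, det_mul] at h
  exact (isUnit_iff_isUnit_det _).2 (isUnit_of_mul_isUnit_left h)

end Matrix.PosSemidef

/-- The Birman–Schwinger principle in finite dimensions: for `A` Hermitian,
`B ≥ 0`, and `E` below the bottom of the spectrum of `A`, the number of
eigenvalues of `A − B` below `E` equals the number of eigenvalues of the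
Birman–Schwinger operator `B^{1/2} (A−E)⁻¹ B^{1/2}` greater than `1`. -/
theorem birman_schwinger_finite_dim {n : Type*} [Fintype n] [DecidableEq n]
    (A B : Matrix n n ℂ) (hA : A.IsHermitian) (hB : B.PosSemidef)
    (E : ℝ) (hE : ∀ i, E < hA.eigenvalues i)
    (hAB : (A - B).IsHermitian)
    (hK : (hB.sqrt * (A - E • 1)⁻¹ * hB.sqrt).IsHermitian) :
    (Finset.univ.filter fun i => hAB.eigenvalues i < E).card
      = (Finset.univ.filter fun i => 1 < hK.eigenvalues i).card := by
  have hP := hA.posDef_sub_smul_one hE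
  set S := hP.posSemidef.sqrt
  set R := hB.sqrt
  have hS : IsUnit S.det := (isUnit_iff_isUnit_det _).1 (hP.posSemidef.isUnit_sqrt hP.isUnit)
  have hSS : S * S = A - E • 1 := hP.posSemidef.sqrt_mul_self
  have hSH : Sᴴ = S := hP.posSemidef.posSemidef_sqrt.1
  have hRH : Rᴴ = R := hB.posSemidef_sqrt.1
  set Y := R * S⁻¹
  have hRY : R = Y * S := by
    rw [Matrix.mul_assoc, nonsing_inv_mul _ hS, Matrix.mul_one]
  have hLHS : A - B - E • 1 = Sᴴ * S - (Y * S)ᴴ * (Y * S) := by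
    rw [← hRY, hSH, hRH, hSS, hB.sqrt_mul_self]
    abel
  have hRHS : (1 : ℝ) • 1 - R * (A - E • 1)⁻¹ * R = 1ᴴ * 1 - Yᴴᴴ * Yᴴ := by
    rw [← hSS, Matrix.mul_inv_rev]
    simp [Y, Matrix.conjTranspose_nonsing_inv, hSH, hRH, Matrix.mul_assoc]
  rw [hAB.card_eigenvalues_lt_eq_maxFinrank, hK.card_lt_eigenvalues_eq_maxFinrank, hLHS, hRHS]
  simp_rw [re_inner_toEuclideanLin_neg_iff, toLpLin_mul_same, LinearMap.comp_apply, toLpLin_one,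
    LinearMap.id_apply, toEuclideanLin_conjTranspose_eq_adjoint,
    maxFinrank_norm_lt_norm_adjoint_apply]
  exact maxFinrank_comp_toEuclideanLin hS fun y => ‖y‖ < ‖toEuclideanLin Y y‖
end

section
/- Let A be a Hermitian matrix with E < min spec(A), and B ≥ 0 positive semidefinite. For x ≥ 0, the smallest eigenvalue of A − xB is a nonincreasing function of x, and the number of eigenvalues of A − B below E (with multiplicity) equals the number of x ∈ (0,1) (with multiplicity) for which E is an eigenvalue of A − xB, where multiplicity at x means dim ker(A − xB − E). -/
open scoped Classical ComplexOrder ENNReal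

/-!
Write `A - E = Rᴴ R` with `R` invertible (possible since `E < min spec A`) and put
`K = R⁻ᴴ B R⁻¹`, so that `A - xB - E = Rᴴ (1 - xK) R`. By Sylvester's law of inertia the number
of eigenvalues of `A - B` below `E` is the number of negative eigenvalues of `1 - K`, i.e. the
number of eigenvalues `κ > 1` of `K`; and `ker (A - xB - E) ≅ ker (1 - xK)` is the `κ`-eigenspace
of `K` for `κ = 1/x`. Summing over `x ∈ (0,1)` counts each eigenvalue `κ > 1` exactly once.

For monotonicity: if `M - N ≥ 0`, a subspace on which `M - c` is negative definite is one for
`N - c` too, so `N` has at least as many eigenvalues below any `c` as `M`.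
-/

open Matrix Module Finset

lemma sigNeg_le_sigNeg_of_le {M : Type*} [AddCommGroup M] [Module ℝ M] [FiniteDimensional ℝ M]
    {Q Q' : QuadraticForm ℝ M} (h : ∀ v, Q' v ≤ Q v) : sigNeg Q ≤ sigNeg Q' := by
  obtain ⟨V, hV, hneg⟩ := exists_finrank_eq_sigNeg_and_negDef Q
  rw [← hV]
  refine le_sigNeg_of_negDef Q' fun v hv => ?_
  have := hneg v hv
  simp only [_root_.neg_apply, QuadraticMap.restrict_apply] at this ⊢
  linarith [h v]

lemma tsum_card_filter_eq_card_filter_mem {ι α : Type*} [Fintype ι] (f : ι → α) (s : Set α)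
    [DecidablePred (· ∈ s)] :
    ∑' x : s, (#{i | f i = x} : ℝ≥0∞) = #{i | f i ∈ s} := by
  simp only [card_filter, Nat.cast_sum, Nat.cast_ite, Nat.cast_one, Nat.cast_zero]
  rw [Summable.tsum_finsetSum fun _ _ => ENNReal.summable]
  refine sum_congr rfl fun i _ => ?_
  split_ifs with hi
  · rw [tsum_eq_single (⟨f i, hi⟩ : s) fun x hx => if_neg fun h => hx (Subtype.ext h.symm)]
    simp
  · exact ENNReal.tsum_eq_zero.mpr fun x => if_neg fun h : f i = x => hi (h ▸ x.2)

namespace Matrix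

variable {n : Type*} [Fintype n]

/-- `v ↦ Re (v* M v)` on `ℂⁿ` viewed as a real vector space, so that Sylvester's law of inertia
over `ℝ` (`sigNeg`) applies; real dimensions are twice the complex ones. -/
noncomputable def reQuadForm (M : Matrix n n ℂ) : QuadraticForm ℝ (n → ℂ) :=
  LinearMap.BilinMap.toQuadraticMap <|
    LinearMap.mk₂ ℝ (fun u v => (star u ⬝ᵥ M *ᵥ v).re)
      (fun u u' v => by simp [add_dotProduct])
      (fun c u v => by simp [smul_dotProduct])
      (fun u v v' => by simp [mulVec_add, dotProduct_add])
      (fun c u v => by simp [mulVec_smul, dotProduct_smul])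

@[simp] lemma reQuadForm_apply (M : Matrix n n ℂ) (v : n → ℂ) :
    reQuadForm M v = (star v ⬝ᵥ M *ᵥ v).re := rfl

lemma reQuadForm_conjTranspose_mul_mul (C M : Matrix n n ℂ) (v : n → ℂ) :
    reQuadForm (Cᴴ * M * C) v = reQuadForm M (C *ᵥ v) := by
  simp only [reQuadForm_apply, star_mulVec, ← mulVec_mulVec, dotProduct_mulVec, vecMul_vecMul]

variable [DecidableEq n]

lemma equivalent_reQuadForm_conjTranspose_mul_mul (M : Matrix n n ℂ) (C : (Matrix n n ℂ)ˣ) :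
    (reQuadForm ((C : Matrix n n ℂ)ᴴ * M * (C : Matrix n n ℂ))).Equivalent (reQuadForm M) :=
  ⟨{ toLinearEquiv := ((C : Matrix n n ℂ).toLinearEquiv' inferInstance).restrictScalars ℝ,
     map_app' := fun v => (reQuadForm_conjTranspose_mul_mul _ M v).symm }⟩

lemma equivalent_reQuadForm_diagonal (d : n → ℝ) :
    (reQuadForm (diagonal fun i => (d i : ℂ))).Equivalent
      (QuadraticMap.weightedSumSquares ℝ fun p : n × Fin 2 => d p.1) :=
  ⟨{ toLinearEquiv := (LinearEquiv.piCongrRight fun _ => Complex.basisOneI.equivFun).trans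
        (LinearEquiv.curry ℝ ℝ n (Fin 2)).symm,
     map_app' := fun v => by
        simp [QuadraticMap.weightedSumSquares_apply, Fintype.sum_prod_type, dotProduct,
          mulVec_diagonal, mul_left_comm, mul_add] }⟩

lemma sigNeg_reQuadForm_diagonal (d : n → ℝ) :
    sigNeg (reQuadForm (diagonal fun i => (d i : ℂ))) = 2 * #{i | d i < 0} := by
  rw [(equivalent_reQuadForm_diagonal d).sigNeg_eq, QuadraticForm.sigNeg_weightedSumSquares]
  have : {p : n × Fin 2 | d p.1 < 0} = {i | d i < 0} ×ˢ Set.univ := by ext; simp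
  rw [this, Set.ncard_prod, Set.ncard_univ, Nat.card_eq_fintype_card, Fintype.card_fin, mul_comm,
    Set.ncard_eq_toFinset_card', Set.toFinset_ofPred]

lemma finrank_ker_toLin' (M : Matrix n n ℂ) :
    finrank ℂ (LinearMap.ker (toLin' M)) = Fintype.card n - M.rank := by
  have := (toLin' M).finrank_range_add_finrank_ker
  rw [finrank_fintype_fun_eq_card] at this
  rw [Matrix.rank, ← toLin'_apply']
  omega

lemma finrank_ker_toLin'_conjTranspose_mul_mul (C : (Matrix n n ℂ)ˣ) (M : Matrix n n ℂ) :
    finrank ℂ (LinearMap.ker (toLin' ((C : Matrix n n ℂ)ᴴ * M * (C : Matrix n n ℂ)))) =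
      finrank ℂ (LinearMap.ker (toLin' M)) := by
  have hC := isUnits_det_units C
  rw [finrank_ker_toLin', finrank_ker_toLin', rank_mul_eq_left_of_isUnit_det _ _ hC,
    rank_mul_eq_right_of_isUnit_det _ _ (by rw [det_conjTranspose]; exact hC.star)]

lemma finrank_ker_toLin'_diagonal (d : n → ℂ) :
    finrank ℂ (LinearMap.ker (toLin' (diagonal d))) = #{i | d i = 0} := by
  rw [finrank_ker_toLin', rank_diagonal, Fintype.card_subtype_compl, Fintype.card_subtype,
    Nat.sub_sub_self (card_le_univ _)]

namespace IsHermitian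

variable {M N : Matrix n n ℂ}

lemma exists_units_smul_one_add_smul_eq (hM : M.IsHermitian) (a b : ℝ) :
    ∃ V : (Matrix n n ℂ)ˣ, a • 1 + b • M =
      (V : Matrix n n ℂ)ᴴ * diagonal (fun i => ((a + b * hM.eigenvalues i : ℝ) : ℂ)) * V := by
  set U : Matrix n n ℂ := (hM.eigenvectorUnitary : Matrix n n ℂ)
  have hUU : U * Uᴴ = 1 := Unitary.mul_star_self_of_mem hM.eigenvectorUnitary.prop
  refine ⟨⟨Uᴴ, U, Unitary.star_mul_self_of_mem hM.eigenvectorUnitary.prop, hUU⟩, ?_⟩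
  have hdiag : diagonal (fun i => ((a + b * hM.eigenvalues i : ℝ) : ℂ)) =
      a • 1 + b • diagonal (RCLike.ofReal ∘ hM.eigenvalues) := by
    ext i j
    rcases eq_or_ne i j with rfl | hij
    · simp [Complex.real_smul]
    · simp [hij]
  conv_lhs => rw [hM.spectral_theorem, Unitary.conjStarAlgAut_apply]
  simp only [conjTranspose_conjTranspose, hdiag, Matrix.mul_add, Matrix.add_mul, Matrix.mul_smul,
    Matrix.smul_mul, mul_one, hUU, star_eq_conjTranspose]
  rfl

lemma sigNeg_reQuadForm_smul_one_add_smul (hM : M.IsHermitian) (a b : ℝ) :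
    sigNeg (reQuadForm (a • 1 + b • M)) = 2 * #{i | a + b * hM.eigenvalues i < 0} := by
  obtain ⟨V, hV⟩ := hM.exists_units_smul_one_add_smul_eq a b
  rw [hV, (equivalent_reQuadForm_conjTranspose_mul_mul _ V).sigNeg_eq, sigNeg_reQuadForm_diagonal]

lemma sigNeg_reQuadForm_sub_smul_one (hM : M.IsHermitian) (c : ℝ) :
    sigNeg (reQuadForm (M - c • 1)) = 2 * #{i | hM.eigenvalues i < c} := by
  rw [show M - c • 1 = (-c) • 1 + (1 : ℝ) • M by module, sigNeg_reQuadForm_smul_one_add_smul hM]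
  congr 2
  exact filter_congr fun i _ => by constructor <;> intro h <;> linarith

lemma sigNeg_reQuadForm_one_sub (hM : M.IsHermitian) :
    sigNeg (reQuadForm (1 - M)) = 2 * #{i | 1 < hM.eigenvalues i} := by
  rw [show 1 - M = (1 : ℝ) • 1 + (-1 : ℝ) • M by module, sigNeg_reQuadForm_smul_one_add_smul hM]
  congr 2
  exact filter_congr fun i _ => by constructor <;> intro h <;> linarith

lemma finrank_ker_toLin'_one_sub_smul (hM : M.IsHermitian) (t : ℝ) :
    finrank ℂ (LinearMap.ker (toLin' (1 - t • M))) = #{i | t * hM.eigenvalues i = 1} := by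
  obtain ⟨V, hV⟩ := hM.exists_units_smul_one_add_smul_eq 1 (-t)
  rw [show 1 - t • M = (1 : ℝ) • 1 + (-t) • M by module, hV,
    finrank_ker_toLin'_conjTranspose_mul_mul, finrank_ker_toLin'_diagonal]
  refine congrArg card (filter_congr fun i _ => ?_)
  rw [Complex.ofReal_eq_zero]
  constructor <;> intro h <;> linarith

lemma exists_units_sub_smul_one_eq_conjTranspose_mul (hM : M.IsHermitian) {c : ℝ}
    (hc : ∀ i, c < hM.eigenvalues i) :
    ∃ R : (Matrix n n ℂ)ˣ, M - c • 1 = (R : Matrix n n ℂ)ᴴ * R := by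
  obtain ⟨V, hV⟩ := hM.exists_units_smul_one_add_smul_eq (-c) 1
  set s : n → ℂ := fun i => (√(hM.eigenvalues i - c) : ℂ)
  have hs : IsUnit (diagonal s) := isUnit_diagonal.2 <| Pi.isUnit_iff.2 fun i =>
    isUnit_iff_ne_zero.2 <| Complex.ofReal_ne_zero.2 (Real.sqrt_pos.2 (sub_pos.2 (hc i))).ne'
  refine ⟨hs.unit * V, ?_⟩
  rw [show M - c • 1 = (-c) • 1 + (1 : ℝ) • M by module, hV, Units.val_mul, IsUnit.unit_spec,
    conjTranspose_mul, diagonal_conjTranspose]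
  simp only [mul_assoc]
  rw [← mul_assoc (diagonal _), diagonal_mul_diagonal]
  congr 3
  ext i
  rw [Pi.star_apply, RCLike.star_def, Complex.conj_ofReal, ← Complex.ofReal_mul,
    Real.mul_self_sqrt (sub_pos.2 (hc i)).le]
  push_cast
  ring

lemma exists_sub_smul_sub_smul_one_eq_conjTranspose_mul_mul (hM : M.IsHermitian)
    (hN : N.IsHermitian) {c : ℝ} (hc : ∀ i, c < hM.eigenvalues i) :
    ∃ (R : (Matrix n n ℂ)ˣ) (K : Matrix n n ℂ), K.IsHermitian ∧
      ∀ t : ℝ, M - t • N - c • 1 = (R : Matrix n n ℂ)ᴴ * (1 - t • K) * (R : Matrix n n ℂ) := by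
  obtain ⟨R, hR⟩ := hM.exists_units_sub_smul_one_eq_conjTranspose_mul hc
  set Ri : Matrix n n ℂ := ↑R⁻¹
  have hRi : (R : Matrix n n ℂ)ᴴ * Riᴴ = 1 := by
    rw [← conjTranspose_mul, Units.inv_mul, conjTranspose_one]
  refine ⟨R, Riᴴ * N * Ri, ?_, fun t => ?_⟩
  · simp only [IsHermitian, conjTranspose_mul, conjTranspose_conjTranspose, hN.eq, mul_assoc]
  · have hN' : (R : Matrix n n ℂ)ᴴ * (Riᴴ * N * Ri) * R = N := by
      simp only [← mul_assoc, hRi, one_mul]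
      rw [mul_assoc, Units.inv_mul, mul_one]
    rw [Matrix.mul_sub, Matrix.sub_mul, mul_one, Matrix.mul_smul, Matrix.smul_mul, hN', ← hR]
    module

lemma card_eigenvalues_lt_le_of_posSemidef_sub (hM : M.IsHermitian) (hN : N.IsHermitian)
    (h : (M - N).PosSemidef) (c : ℝ) :
    #{i | hM.eigenvalues i < c} ≤ #{i | hN.eigenvalues i < c} := by
  have hQ : ∀ v, reQuadForm (N - c • 1) v ≤ reQuadForm (M - c • 1) v := fun v => by
    have := (Complex.le_def.mp (h.dotProduct_mulVec_nonneg v)).1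
    simp only [reQuadForm_apply, sub_mulVec, dotProduct_sub, Complex.sub_re, Complex.zero_re]
      at this ⊢
    linarith
  have := sigNeg_le_sigNeg_of_le hQ
  rw [hM.sigNeg_reQuadForm_sub_smul_one, hN.sigNeg_reQuadForm_sub_smul_one] at this
  omega

lemma iInf_eigenvalues_le_of_posSemidef_sub [Nonempty n] (hM : M.IsHermitian)
    (hN : N.IsHermitian) (h : (M - N).PosSemidef) :
    ⨅ i, hN.eigenvalues i ≤ ⨅ i, hM.eigenvalues i := by
  by_contra! hlt
  obtain ⟨i, hi⟩ := exists_lt_of_ciInf_lt hlt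
  have hN0 : #{j | hN.eigenvalues j < ⨅ k, hN.eigenvalues k} = 0 :=
    card_eq_zero.2 <| filter_eq_empty_iff.2 fun j _ =>
      not_lt.2 (ciInf_le (Set.finite_range _).bddBelow j)
  have hM0 : 0 < #{j | hM.eigenvalues j < ⨅ k, hN.eigenvalues k} := card_pos.2 ⟨i, by simpa⟩
  have := hM.card_eigenvalues_lt_le_of_posSemidef_sub hN h (⨅ k, hN.eigenvalues k)
  omega

end IsHermitian

end Matrix

/-- Finite-dimensional version of (1.15): for `A` Hermitian, `B ≥ 0` and
`E < min spec(A)`, the lowest eigenvalue of `A − xB` is nonincreasing in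
`x ≥ 0`, and the number of eigenvalues of `A − B` below `E` (with
multiplicity) equals the number of `x ∈ (0,1)` for which `E` is an eigenvalue
of `A − xB`, counted with multiplicity `dim ker(A − xB − E)`. -/
theorem eigenvalue_crossings_count {n : Type*} [Fintype n] [DecidableEq n] [Nonempty n]
    (A B : Matrix n n ℂ) (hA : A.IsHermitian) (hB : B.PosSemidef)
    (hHerm : ∀ x : ℝ, (A - x • B).IsHermitian)
    (E : ℝ) (hE : ∀ i, E < hA.eigenvalues i) :
    (∀ x y : ℝ, 0 ≤ x → x ≤ y →
      (⨅ i, (hHerm y).eigenvalues i) ≤ ⨅ i, (hHerm x).eigenvalues i) ∧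
    (((Finset.univ.filter fun i => (hHerm 1).eigenvalues i < E).card : ℝ≥0∞)
      = ∑' x : Set.Ioo (0:ℝ) 1,
          (Module.finrank ℂ
            ↥(LinearMap.ker (Matrix.toLin' (A - (x : ℝ) • B - E • 1))) : ℝ≥0∞)) := by
  refine ⟨fun x y _ hxy => (hHerm x).iInf_eigenvalues_le_of_posSemidef_sub (hHerm y) ?_, ?_⟩
  · rw [show A - x • B - (A - y • B) = (y - x) • B by module]
    exact hB.smul (sub_nonneg.2 hxy)
  obtain ⟨R, K, hK, hfactor⟩ := hA.exists_sub_smul_sub_smul_one_eq_conjTranspose_mul_mul hB.1 hE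
  have hcount : #{i | (hHerm 1).eigenvalues i < E} = #{i | 1 < hK.eigenvalues i} := by
    have h := (hHerm 1).sigNeg_reQuadForm_sub_smul_one E
    rw [hfactor, (equivalent_reQuadForm_conjTranspose_mul_mul _ R).sigNeg_eq, one_smul,
      hK.sigNeg_reQuadForm_one_sub] at h
    omega
  have hker (x : Set.Ioo (0 : ℝ) 1) : finrank ℂ (LinearMap.ker (toLin' (A - (x : ℝ) • B - E • 1)))
      = #{i | (hK.eigenvalues i)⁻¹ = x} := by
    rw [hfactor, finrank_ker_toLin'_conjTranspose_mul_mul, hK.finrank_ker_toLin'_one_sub_smul]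
    refine congrArg card (filter_congr fun i _ => ?_)
    rw [mul_eq_one_iff_inv_eq₀ x.2.1.ne', inv_eq_iff_eq_inv, eq_comm]
  rw [tsum_congr fun x => by rw [hker x], tsum_card_filter_eq_card_filter_mem, hcount]
  refine congrArg _ (congrArg card (filter_congr fun i _ => ⟨fun h => ?_, fun h => ?_⟩))
  · exact ⟨inv_pos.2 (one_pos.trans h), inv_lt_one_of_one_lt₀ h⟩
  · exact (inv_lt_one₀ (inv_pos.1 h.1)).1 h.2
end
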